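/- Let Γ↷(P,τ) be a trace-preserving action on a tracial von Neumann algebra, let P₀ ⊆ P be a Γ-invariant von Neumann subalgebra, and let P₀⋊Γ ⊆ N ⊆ P⋊Γ be an intermediate von Neumann subalgebra. Then there is a Γ-invariant von Neumann subalgebra P₀ ⊆ Q ⊆ P with N = Q⋊Γ if and only if E_N(P) ⊆ P, where E_N: P⋊Γ → N is the trace-preserving conditional expectation. -/
import Mathlib


/-!
Common framework: we model tracial von Neumann algebras concretely, as von Neumann
algebras `M ⊆ B(H)` (Mathlib's `VonNeumannAlgebra H`, i.e. star-subalgebras equal to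
their double commutant) equipped with a faithful tracial state, and we model the
crossed product `A ⋊ Γ` of a trace-preserving action axiomatically: `M` contains a
copy of `A` and a group `(u γ)` of unitaries normalizing `A`, such that the canonical
trace-preserving conditional expectation `E_A` kills `u γ` for `γ ≠ 1`, and such that
an element of `M` all of whose Fourier coefficients `E_A (x (u γ)*)` vanish is `0`.
Probability-measure-preserving actions `Γ ↷ (X, μ)` are modelled via the associated
trace-preserving action on the abelian von Neumann algebra `A = L^∞(X)`.
-/

noncomputable section

open scoped Classical

namespace CD

/-- A group has infinite conjugacy classes (icc) if every nontrivial conjugacy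
class is infinite. -/
def IsICC (Γ : Type) [Group Γ] : Prop :=
  ∀ γ : Γ, γ ≠ 1 → {g : Γ | ∃ h : Γ, g = h * γ * h⁻¹}.Infinite

/-- A faithful tracial state on (the elements of) a set `M ⊆ B(H)` (in applications,
a von Neumann algebra), given as a globally defined linear functional whose
axioms are imposed on `M`. -/
structure TraceOn (H : Type) [NormedAddCommGroup H] [InnerProductSpace ℂ H] [CompleteSpace H]
    (M : Set (H →L[ℂ] H)) : Type where
  τ : (H →L[ℂ] H) →ₗ[ℂ] ℂ
  unital : τ 1 = 1
  tracial : ∀ x ∈ M, ∀ y ∈ M, τ (x * y) = τ (y * x)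
  star_eq : ∀ x ∈ M, τ (star x) = starRingEnd ℂ (τ x)
  nonneg : ∀ x ∈ M, 0 ≤ (τ (star x * x)).re ∧ (τ (star x * x)).im = 0
  faithful : ∀ x ∈ M, τ (star x * x) = 0 → x = 0

variable {H : Type} [NormedAddCommGroup H] [InnerProductSpace ℂ H] [CompleteSpace H]

/-- The 2-norm `‖x‖₂ = τ(x* x)^{1/2}` associated with a trace. -/
def TraceOn.norm2 {M : Set (H →L[ℂ] H)} (tr : TraceOn H M) (x : H →L[ℂ] H) : ℝ :=
  Real.sqrt (tr.τ (star x * x)).re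

/-- The (unique) trace-preserving conditional expectation from `M` onto a
von Neumann subalgebra `N ⊆ M`. -/
structure CondExpOn (H : Type) [NormedAddCommGroup H] [InnerProductSpace ℂ H] [CompleteSpace H]
    (M N : Set (H →L[ℂ] H)) (tr : TraceOn H M) : Type where
  E : (H →L[ℂ] H) →ₗ[ℂ] (H →L[ℂ] H)
  mem : ∀ x ∈ M, E x ∈ N
  fix : ∀ x ∈ N, E x = x
  bimod : ∀ a ∈ N, ∀ b ∈ N, ∀ x ∈ M, E (a * x * b) = a * E x * b
  star_map : ∀ x ∈ M, E (star x) = star (E x)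
  trace_eq : ∀ x ∈ M, tr.τ (E x) = tr.τ x
  contractive : ∀ x ∈ M, tr.norm2 (E x) ≤ tr.norm2 x

/-- The double commutant of a subset of `B(H)`: the von Neumann algebra
generated by `S` (for `S` a star-closed unital set). -/
def vnGen (S : Set (H →L[ℂ] H)) : Set (H →L[ℂ] H) :=
  Set.centralizer (Set.centralizer S)

/-- Model of the crossed product von Neumann algebra `M = A ⋊ Γ` of a
trace-preserving action `Γ ↷ (A, τ)`: `M` is generated by a copy of `A`
and canonical unitaries `(u γ)` implementing the action, with its canonical
conditional expectation `E_A` onto `A` (characterising the Fourier coefficients),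
together with the group von Neumann algebra `L(Γ) = {u γ : γ}'' ⊆ M` and the
conditional expectation onto it. -/
structure CrossedProduct (Γ : Type) [Group Γ]
    (H : Type) [NormedAddCommGroup H] [InnerProductSpace ℂ H] [CompleteSpace H] : Type where
  M : VonNeumannAlgebra H
  A : VonNeumannAlgebra H
  A_sub : (A : Set (H →L[ℂ] H)) ⊆ (M : Set (H →L[ℂ] H))
  tr : TraceOn H (M : Set (H →L[ℂ] H))
  u : Γ → (H →L[ℂ] H)
  u_mem : ∀ γ, u γ ∈ M
  u_one : u 1 = 1
  u_mul : ∀ γ δ, u γ * u δ = u (γ * δ)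
  u_star : ∀ γ, star (u γ) = u γ⁻¹
  conj_mem : ∀ (γ : Γ), ∀ a ∈ A, u γ * a * star (u γ) ∈ A
  EA : CondExpOn H (M : Set (H →L[ℂ] H)) (A : Set (H →L[ℂ] H)) tr
  EA_u : ∀ γ : Γ, γ ≠ 1 → EA.E (u γ) = 0
  fourier_sep : ∀ x ∈ M, (∀ γ : Γ, EA.E (x * star (u γ)) = 0) → x = 0
  Lg : VonNeumannAlgebra H
  Lg_eq : (Lg : Set (H →L[ℂ] H)) = vnGen (Set.range u)
  Lg_sub : (Lg : Set (H →L[ℂ] H)) ⊆ (M : Set (H →L[ℂ] H))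
  EL : CondExpOn H (M : Set (H →L[ℂ] H)) (Lg : Set (H →L[ℂ] H)) tr

variable {Γ : Type} [Group Γ]

/-- The action `σ_γ = Ad(u γ)` of `Γ` on `B(H)`, restricting to the given
action on `A`. -/
def CrossedProduct.σ (X : CrossedProduct Γ H) (γ : Γ) (x : H →L[ℂ] H) : H →L[ℂ] H :=
  X.u γ * x * star (X.u γ)

/-- The action is properly outer over the center of `P`; for abelian `P` this is
the usual freeness of the action. -/
def ProperlyOuterOn (X : CrossedProduct Γ H) (P : Set (H →L[ℂ] H)) : Prop :=
  ∀ γ : Γ, γ ≠ 1 → ∀ a ∈ P, (∀ b ∈ P, X.σ γ b * a = a * b) → a = 0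

/-- Freeness of the action `Γ ↷ A`. -/
def IsFree (X : CrossedProduct Γ H) : Prop := ProperlyOuterOn X (X.A : Set (H →L[ℂ] H))

/-- Ergodicity of the action `Γ ↷ A`: the fixed points are the scalars. -/
def IsErgodic (X : CrossedProduct Γ H) : Prop :=
  ∀ a ∈ X.A, (∀ γ : Γ, X.σ γ a = a) → ∃ c : ℂ, a = c • (1 : H →L[ℂ] H)

def IsAbelianSet (S : Set (H →L[ℂ] H)) : Prop := ∀ x ∈ S, ∀ y ∈ S, x * y = y * x

/-- `Q` is a `Γ`-invariant subset (in applications, subalgebra). -/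
def InvariantUnder (X : CrossedProduct Γ H) (Q : Set (H →L[ℂ] H)) : Prop :=
  ∀ (γ : Γ), ∀ q ∈ Q, X.σ γ q ∈ Q

/-- The intermediate crossed product `Q ⋊ Γ ⊆ A ⋊ Γ` of a (`Γ`-invariant)
subalgebra `Q ⊆ A`: those elements all of whose Fourier coefficients lie in `Q`. -/
def midCP (X : CrossedProduct Γ H) (Q : Set (H →L[ℂ] H)) : Set (H →L[ℂ] H) :=
  {x | x ∈ X.M ∧ ∀ γ : Γ, X.EA.E (x * star (X.u γ)) ∈ Q}

/-- The intermediate crossed product `A ⋊ K ⊆ A ⋊ Γ` of a subgroup `K ≤ Γ`: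
those elements whose Fourier coefficients are supported on `K`. -/
def subgpCP (X : CrossedProduct Γ H) (K : Subgroup Γ) : Set (H →L[ℂ] H) :=
  {x | x ∈ X.M ∧ ∀ γ : Γ, γ ∉ K → X.EA.E (x * star (X.u γ)) = 0}

/-- The quasinormalizer `QN_M(P)` of `P` inside `M`. -/
def QNset (M P : Set (H →L[ℂ] H)) : Set (H →L[ℂ] H) :=
  {x | x ∈ M ∧ ∃ (n : ℕ) (y : Fin n → (H →L[ℂ] H)), (∀ i, y i ∈ M) ∧
    (∀ p ∈ P, ∃ q : Fin n → (H →L[ℂ] H), (∀ i, q i ∈ P) ∧ p * x = ∑ i, y i * q i) ∧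
    (∀ p ∈ P, ∃ q : Fin n → (H →L[ℂ] H), (∀ i, q i ∈ P) ∧ x * p = ∑ i, q i * y i)}

def IsUnitaryIn (S : Set (H →L[ℂ] H)) (x : H →L[ℂ] H) : Prop :=
  x ∈ S ∧ star x * x = 1 ∧ x * star x = 1

def IsProjIn (S : Set (H →L[ℂ] H)) (p : H →L[ℂ] H) : Prop :=
  p ∈ S ∧ star p = p ∧ p * p = p

/-- The relative commutant `N' ∩ S`. -/
def commutantIn (N S : Set (H →L[ℂ] H)) : Set (H →L[ℂ] H) :=
  {x | x ∈ S ∧ ∀ y ∈ N, x * y = y * x}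

/-- Conjugation `w ( · ) w*` applied to a set. -/
def conjSet (w : H →L[ℂ] H) (S : Set (H →L[ℂ] H)) : Set (H →L[ℂ] H) :=
  (fun y => w * y * star w) '' S

/-- The scalars `ℂ 1 ⊆ B(H)`. -/
def scalars (H : Type) [NormedAddCommGroup H] [InnerProductSpace ℂ H] [CompleteSpace H] :
    Set (H →L[ℂ] H) :=
  Set.range (fun c : ℂ => c • (1 : H →L[ℂ] H))

/-- The extension `P₀ ⊆ P` of `Γ`-algebras is compact: there is a family `F ⊆ P`
with dense `‖·‖₂`-span in `P` such that the `Γ`-orbit of each `f ∈ F` can be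
uniformly approximated by finitely many "`P₀`-finite rank modules". -/
def IsCompactExt (X : CrossedProduct Γ H) (P₀ P : Set (H →L[ℂ] H)) : Prop :=
  ∃ F : Set (H →L[ℂ] H), F ⊆ P ∧
    (∀ p ∈ P, ∀ ε : ℝ, 0 < ε → ∃ (n : ℕ) (c : Fin n → ℂ) (f : Fin n → (H →L[ℂ] H)),
      (∀ i, f i ∈ F) ∧ X.tr.norm2 (p - ∑ i, c i • f i) ≤ ε) ∧
    (∀ f ∈ F, ∀ ε : ℝ, 0 < ε → ∃ (n : ℕ) (ξ : Fin n → (H →L[ℂ] H)) (C : ℝ),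
      (∀ i, ξ i ∈ P) ∧
      ∀ γ : Γ, ∃ κ : Fin n → (H →L[ℂ] H), (∀ i, κ i ∈ P₀) ∧ (∀ i, ‖κ i‖ ≤ C) ∧
        X.tr.norm2 (X.σ γ f - ∑ i, κ i * ξ i) ≤ ε)

/-- The action `Γ ↷ A` is compact: the extension over the scalars is compact. -/
def IsCompactAction (X : CrossedProduct Γ H) : Prop :=
  IsCompactExt X (scalars H) (X.A : Set (H →L[ℂ] H))

/-- The `Γ`-invariant subalgebra `B ⊆ A` gives a mixing extension: for
`t, z ∈ A ⊖ B` one has `‖E_B(t σ_γ(z))‖₂ → 0` as `γ → ∞`. -/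
def IsMixingExt (X : CrossedProduct Γ H) (B : Set (H →L[ℂ] H))
    (EB : CondExpOn H (X.M : Set (H →L[ℂ] H)) B X.tr) : Prop :=
  ∀ t ∈ X.A, ∀ z ∈ X.A, EB.E t = 0 → EB.E z = 0 →
    Filter.Tendsto (fun γ : Γ => X.tr.norm2 (EB.E (t * X.σ γ z))) Filter.cofinite (nhds 0)

/-- A `*`-isomorphism from (the von Neumann algebra with underlying set) `M ⊆ B(H₁)`
onto `N ⊆ B(H₂)`, given as a globally defined map with all axioms imposed on `M`. -/
structure StarIsoOn {H₁ : Type} [NormedAddCommGroup H₁] [InnerProductSpace ℂ H₁]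
    [CompleteSpace H₁] {H₂ : Type} [NormedAddCommGroup H₂] [InnerProductSpace ℂ H₂]
    [CompleteSpace H₂] (M : Set (H₁ →L[ℂ] H₁)) (N : Set (H₂ →L[ℂ] H₂)) : Type where
  Θ : (H₁ →L[ℂ] H₁) → (H₂ →L[ℂ] H₂)
  mem : ∀ x ∈ M, Θ x ∈ N
  map_one : Θ 1 = 1
  map_add : ∀ x ∈ M, ∀ y ∈ M, Θ (x + y) = Θ x + Θ y
  map_smul : ∀ (c : ℂ), ∀ x ∈ M, Θ (c • x) = c • Θ x
  map_mul : ∀ x ∈ M, ∀ y ∈ M, Θ (x * y) = Θ x * Θ y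
  map_star : ∀ x ∈ M, Θ (star x) = star (Θ x)
  inj : ∀ x ∈ M, ∀ y ∈ M, Θ x = Θ y → x = y
  surj : ∀ y ∈ N, ∃ x ∈ M, Θ x = y

/-- `r` is the (Pimsner–Popa/Jones) index of the inclusion `N ⊆ M`, witnessed by a
finite Pimsner–Popa basis `m₁, …, m_k` with `E_N (m_i m_j*) = δ_{ij} p_i`,
`x = ∑ᵢ E_N(x mᵢ*) mᵢ` for `x ∈ M`, and `r = ∑ᵢ τ(pᵢ)`. -/
def HasPPIndex {Mamb : Set (H →L[ℂ] H)} (tr : TraceOn H Mamb)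
    (M N : Set (H →L[ℂ] H)) (r : ℝ) : Prop :=
  ∃ E : (H →L[ℂ] H) →ₗ[ℂ] (H →L[ℂ] H),
    (∀ x ∈ M, E x ∈ N) ∧ (∀ x ∈ N, E x = x) ∧
    (∀ a ∈ N, ∀ b ∈ N, ∀ x ∈ M, E (a * x * b) = a * E x * b) ∧
    (∀ x ∈ M, tr.τ (E x) = tr.τ x) ∧
    ∃ (k : ℕ) (m p : Fin k → (H →L[ℂ] H)),
      (∀ i, m i ∈ M) ∧ (∀ i, p i ∈ N ∧ star (p i) = p i ∧ p i * p i = p i) ∧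
      (∀ i j, E (m i * star (m j)) = if i = j then p i else 0) ∧
      (∀ x ∈ M, x = ∑ i, E (x * star (m i)) * m i) ∧
      r = (∑ i, tr.τ (p i)).re

/-- The inclusion `N ⊆ M` has finite (Pimsner–Popa/Jones) index. -/
def FiniteIndexIn {Mamb : Set (H →L[ℂ] H)} (tr : TraceOn H Mamb)
    (M N : Set (H →L[ℂ] H)) : Prop :=
  ∃ r : ℝ, HasPPIndex tr M N r

/-- `S` (a von Neumann algebra) is a factor: trivial center. -/
def IsFactorSet (S : Set (H →L[ℂ] H)) : Prop :=
  ∀ x ∈ S, (∀ y ∈ S, x * y = y * x) → ∃ c : ℂ, x = c • (1 : H →L[ℂ] H)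

/-- `S` is a II₁ factor (with respect to the trace `tr`): a factor whose
projections realize every trace value in `[0,1]`. -/
def IsII1On {Mamb : Set (H →L[ℂ] H)} (tr : TraceOn H Mamb) (S : Set (H →L[ℂ] H)) : Prop :=
  IsFactorSet S ∧ ∀ r : ℝ, 0 ≤ r → r ≤ 1 →
    ∃ p ∈ S, star p = p ∧ p * p = p ∧ tr.τ p = (r : ℂ)

def IsFinDimSet (S : Set (H →L[ℂ] H)) : Prop :=
  ∃ (n : ℕ) (v : Fin n → (H →L[ℂ] H)), (∀ i, v i ∈ S) ∧
    ∀ x ∈ S, ∃ c : Fin n → ℂ, x = ∑ i, c i • v i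

def IsStarSubalgSet (S : Set (H →L[ℂ] H)) : Prop :=
  (1 : H →L[ℂ] H) ∈ S ∧ (∀ x ∈ S, ∀ y ∈ S, x + y ∈ S) ∧ (∀ x ∈ S, ∀ y ∈ S, x * y ∈ S) ∧
    (∀ (c : ℂ), ∀ x ∈ S, c • x ∈ S) ∧ (∀ x ∈ S, star x ∈ S)

/-- `S` is approximately finite dimensional (with respect to `‖·‖₂`); by Connes'
theorem this is equivalent to amenability for (separable, tracial) von Neumann
algebras. -/
def IsAFD {Mamb : Set (H →L[ℂ] H)} (tr : TraceOn H Mamb) (S : Set (H →L[ℂ] H)) : Prop :=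
  ∃ Q : ℕ → Set (H →L[ℂ] H), (∀ n, Q n ⊆ S) ∧ (∀ n, Q n ⊆ Q (n + 1)) ∧
    (∀ n, IsFinDimSet (Q n)) ∧ (∀ n, IsStarSubalgSet (Q n)) ∧
    ∀ x ∈ S, ∀ ε : ℝ, 0 < ε → ∃ n, ∃ y ∈ Q n, tr.norm2 (x - y) ≤ ε

/-- `S` is diffuse: it has no minimal projections. -/
def IsDiffuseSet (S : Set (H →L[ℂ] H)) : Prop :=
  ∀ p, IsProjIn S p → p ≠ 0 →
    ∃ q, IsProjIn S q ∧ q ≠ 0 ∧ q ≠ p ∧ q * p = q ∧ p * q = q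

/-- The (trace-preserving) action of `Γ` on the subalgebra `Q` is transitive:
`Q` is spanned by finitely many orthogonal minimal projections summing to `1`
which are permuted transitively by `Γ`. -/
def IsTransitiveOn (X : CrossedProduct Γ H) (Q : Set (H →L[ℂ] H)) : Prop :=
  ∃ (n : ℕ) (e : Fin n → (H →L[ℂ] H)),
    (∀ i, e i ∈ Q ∧ star (e i) = e i ∧ e i * e i = e i) ∧
    (∀ i j, i ≠ j → e i * e j = 0) ∧ (∑ i, e i = 1) ∧
    (∀ q ∈ Q, ∃ c : Fin n → ℂ, q = ∑ i, c i • e i) ∧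
    (∀ i j, ∃ γ : Γ, X.σ γ (e i) = e j)

/-- An abelian von Neumann algebra `S` is completely atomic: every nonzero
projection dominates a minimal projection. -/
def IsCompletelyAtomic (S : Set (H →L[ℂ] H)) : Prop :=
  ∀ p, IsProjIn S p → p ≠ 0 →
    ∃ q, IsProjIn S q ∧ q ≠ 0 ∧ q * p = q ∧
      ∀ r, IsProjIn S r → r * q = r → r = 0 ∨ r = q

end CD

section Stmt11Aux

open CD

variable {H : Type} [NormedAddCommGroup H] [InnerProductSpace ℂ H] [CompleteSpace H]
variable {Γ : Type} [Group Γ]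

/-- Self-adjointness of a trace-preserving conditional expectation. -/
lemma stmt11_selfadj (M : VonNeumannAlgebra H) (Ns : Set (H →L[ℂ] H))
    (hNM : Ns ⊆ (M : Set (H →L[ℂ] H))) (h1 : (1 : H →L[ℂ] H) ∈ Ns)
    (tr : TraceOn H (M : Set (H →L[ℂ] H)))
    (E : CondExpOn H (M : Set (H →L[ℂ] H)) Ns tr)
    {x y : H →L[ℂ] H} (hx : x ∈ (M : Set (H →L[ℂ] H))) (hy : y ∈ (M : Set (H →L[ℂ] H))) :
    tr.τ (E.E x * y) = tr.τ (x * E.E y) := by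
  have hEx : E.E x ∈ Ns := E.mem x hx
  have hEy : E.E y ∈ Ns := E.mem y hy
  calc tr.τ (E.E x * y) = tr.τ (E.E (E.E x * y)) :=
        (E.trace_eq _ (mul_mem (hNM hEx) hy)).symm
    _ = tr.τ (E.E x * E.E y) := by
        have h := E.bimod (E.E x) hEx 1 h1 y hy
        rw [mul_one, mul_one] at h
        rw [h]
    _ = tr.τ (E.E (x * E.E y)) := by
        have h := E.bimod 1 h1 (E.E y) hEy x hx
        rw [one_mul, one_mul] at h
        rw [h]
    _ = tr.τ (x * E.E y) := E.trace_eq _ (mul_mem hx (hNM hEy))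

/-- For `a ∈ A` and `w ∈ M`, `τ(a E_A(w)) = τ(a w)`. -/
lemma stmt11_EA_coeff (X : CrossedProduct Γ H) {a w : H →L[ℂ] H}
    (ha : a ∈ (X.A : Set (H →L[ℂ] H))) (hw : w ∈ (X.M : Set (H →L[ℂ] H))) :
    X.tr.τ (a * X.EA.E w) = X.tr.τ (a * w) := by
  have h := X.EA.bimod a ha 1 (one_mem X.A) w hw
  rw [mul_one, mul_one] at h
  rw [← h]
  exact X.EA.trace_eq _ (mul_mem (X.A_sub ha) hw)

/-- An element of `M` orthogonal to `A` has vanishing expectation onto `A`. -/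
lemma stmt11_EA_zero_of (X : CrossedProduct Γ H) {w : H →L[ℂ] H}
    (hw : w ∈ (X.M : Set (H →L[ℂ] H)))
    (h : ∀ a ∈ (X.A : Set (H →L[ℂ] H)), X.tr.τ (a * w) = 0) : X.EA.E w = 0 := by
  have hb : X.EA.E w ∈ (X.A : Set (H →L[ℂ] H)) := X.EA.mem w hw
  have hbs : star (X.EA.E w) ∈ (X.A : Set (H →L[ℂ] H)) := star_mem hb
  refine X.tr.faithful _ (X.A_sub hb) ?_
  rw [stmt11_EA_coeff X hbs hw]
  exact h _ hbs

lemma stmt11_star_u_one (X : CrossedProduct Γ H) : star (X.u (1 : Γ)) = 1 := by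
  rw [X.u_one, star_one]

/-- Vanishing of nontrivial Fourier coefficients of elements of `A`. -/
lemma stmt11_coeff_A_ne (X : CrossedProduct Γ H) {q : H →L[ℂ] H}
    (hq : q ∈ (X.A : Set (H →L[ℂ] H))) {γ : Γ} (hγ : γ ≠ 1) :
    X.EA.E (q * star (X.u γ)) = 0 := by
  have husM : star (X.u γ) ∈ (X.M : Set (H →L[ℂ] H)) := star_mem (X.u_mem γ)
  have h := X.EA.bimod q hq 1 (one_mem X.A) (star (X.u γ)) husM
  rw [mul_one, mul_one] at h
  rw [h]
  have h0 : X.EA.E (star (X.u γ)) = 0 := by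
    rw [X.u_star]
    exact X.EA_u _ (inv_ne_one.mpr hγ)
  rw [h0, mul_zero]

/-- Elements of `A` belonging to `Q` belong to `Q ⋊ Γ`. -/
lemma stmt11_mem_midCP_of_A (X : CrossedProduct Γ H) (Qs : Set (H →L[ℂ] H))
    (h0 : (0 : H →L[ℂ] H) ∈ Qs) {q : H →L[ℂ] H}
    (hqA : q ∈ (X.A : Set (H →L[ℂ] H))) (hqQ : q ∈ Qs) : q ∈ midCP X Qs := by
  refine ⟨X.A_sub hqA, fun δ => ?_⟩
  by_cases h : δ = 1
  · subst h
    rw [stmt11_star_u_one X, mul_one, X.EA.fix q hqA]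
    exact hqQ
  · rw [stmt11_coeff_A_ne X hqA h]
    exact h0

/-- The canonical unitaries belong to `Q ⋊ Γ`. -/
lemma stmt11_u_mem_midCP (X : CrossedProduct Γ H) (Qs : Set (H →L[ℂ] H))
    (h0 : (0 : H →L[ℂ] H) ∈ Qs) (h1 : (1 : H →L[ℂ] H) ∈ Qs) (γ : Γ) :
    X.u γ ∈ midCP X Qs := by
  refine ⟨X.u_mem γ, fun δ => ?_⟩
  have hu : X.u γ * star (X.u δ) = X.u (γ * δ⁻¹) := by rw [X.u_star, X.u_mul]
  rw [hu]
  by_cases h : γ * δ⁻¹ = 1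
  · rw [h, X.u_one, X.EA.fix 1 (one_mem X.A)]
    exact h1
  · rw [X.EA_u _ h]
    exact h0

/-- Double-commutant closure of the intersection of two von Neumann algebras. -/
lemma stmt11_inter_cc (A N : VonNeumannAlgebra H) :
    Set.centralizer (Set.centralizer ((A : Set (H →L[ℂ] H)) ∩ (N : Set (H →L[ℂ] H))))
      = (A : Set (H →L[ℂ] H)) ∩ (N : Set (H →L[ℂ] H)) := by
  have h : ((A : Set (H →L[ℂ] H)) ∩ (N : Set (H →L[ℂ] H)))
      = Set.centralizer (Set.centralizer (A : Set (H →L[ℂ] H))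
          ∪ Set.centralizer (N : Set (H →L[ℂ] H))) := by
    rw [Set.centralizer_union, A.centralizer_centralizer, N.centralizer_centralizer]
  rw [h, Set.centralizer_centralizer_centralizer]

end Stmt11Aux

open CD in
/-- Theorem `usefulresult`. Let `Γ ↷ (P, τ)` be a trace-preserving
action, `P₀ ⊆ P` a `Γ`-invariant subalgebra and `P₀ ⋊ Γ ⊆ N ⊆ P ⋊ Γ` an intermediate
von Neumann subalgebra, with trace-preserving conditional expectation `E_N`. Then `N`
is of the form `Q ⋊ Γ` for a `Γ`-invariant subalgebra `P₀ ⊆ Q ⊆ P` if and only if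
`E_N(P) ⊆ P`. -/
theorem stmt11_intermediate_iff_expectation_preserves_coefficients
    (Γ : Type) [Group Γ]
    (H : Type) [NormedAddCommGroup H] [InnerProductSpace ℂ H] [CompleteSpace H]
    -- the crossed product `P ⋊ Γ`, with `P = X.A`
    (X : CrossedProduct Γ H)
    -- a `Γ`-invariant subalgebra `P₀ ⊆ P`
    (P₀ : VonNeumannAlgebra H)
    (hP₀ : (P₀ : Set (H →L[ℂ] H)) ⊆ (X.A : Set (H →L[ℂ] H)))
    (hP₀inv : InvariantUnder X (P₀ : Set (H →L[ℂ] H)))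
    -- an intermediate von Neumann subalgebra `P₀ ⋊ Γ ⊆ N ⊆ P ⋊ Γ`
    (N : VonNeumannAlgebra H)
    (hN₁ : midCP X (P₀ : Set (H →L[ℂ] H)) ⊆ (N : Set (H →L[ℂ] H)))
    (hN₂ : (N : Set (H →L[ℂ] H)) ⊆ (X.M : Set (H →L[ℂ] H)))
    -- the trace-preserving conditional expectation of `P ⋊ Γ` onto `N`
    (EN : CondExpOn H (X.M : Set (H →L[ℂ] H)) (N : Set (H →L[ℂ] H)) X.tr) :
    (∃ Q : VonNeumannAlgebra H,
        (P₀ : Set (H →L[ℂ] H)) ⊆ (Q : Set (H →L[ℂ] H)) ∧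
        (Q : Set (H →L[ℂ] H)) ⊆ (X.A : Set (H →L[ℂ] H)) ∧
        InvariantUnder X (Q : Set (H →L[ℂ] H)) ∧
        (N : Set (H →L[ℂ] H)) = midCP X (Q : Set (H →L[ℂ] H)))
      ↔ (∀ a ∈ X.A, EN.E a ∈ X.A) := by
  have h1N : (1 : H →L[ℂ] H) ∈ (N : Set (H →L[ℂ] H)) := one_mem N
  have huN : ∀ δ : Γ, X.u δ ∈ (N : Set (H →L[ℂ] H)) := fun δ =>
    hN₁ (stmt11_u_mem_midCP X _ (zero_mem P₀) (one_mem P₀) δ)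
  constructor
  · rintro ⟨Q, hPQ, hQA, hQinv, hNQ⟩ a ha
    have haA : a ∈ (X.A : Set (H →L[ℂ] H)) := ha
    have haM : a ∈ (X.M : Set (H →L[ℂ] H)) := X.A_sub haA
    have hyN : EN.E a ∈ (N : Set (H →L[ℂ] H)) := EN.mem a haM
    have hyM : EN.E a ∈ (X.M : Set (H →L[ℂ] H)) := hN₂ hyN
    have hymid : EN.E a ∈ midCP X (Q : Set (H →L[ℂ] H)) := by rw [← hNQ]; exact hyN
    obtain ⟨-, hcoef⟩ := hymid
    have hQN : (Q : Set (H →L[ℂ] H)) ⊆ (N : Set (H →L[ℂ] H)) := by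
      intro q hq
      rw [hNQ]
      exact stmt11_mem_midCP_of_A X _ (zero_mem Q) (hQA hq) hq
    have huN' : ∀ δ : Γ, X.u δ ∈ (N : Set (H →L[ℂ] H)) := huN
    -- the nontrivial Fourier coefficients of `E_N(a)` vanish
    have hvanish : ∀ γ : Γ, γ ≠ 1 → X.EA.E (EN.E a * star (X.u γ)) = 0 := by
      intro γ hγ
      set b := X.EA.E (EN.E a * star (X.u γ)) with hbdef
      have hbQ : b ∈ (Q : Set (H →L[ℂ] H)) := hcoef γ
      have hbA : b ∈ (X.A : Set (H →L[ℂ] H)) := hQA hbQ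
      have hbM : b ∈ (X.M : Set (H →L[ℂ] H)) := X.A_sub hbA
      have hsbA : star b ∈ (X.A : Set (H →L[ℂ] H)) := star_mem hbA
      have husM : star (X.u γ) ∈ (X.M : Set (H →L[ℂ] H)) := star_mem (X.u_mem γ)
      have hyu : EN.E a * star (X.u γ) ∈ (X.M : Set (H →L[ℂ] H)) := mul_mem hyM husM
      have hzN : X.u γ⁻¹ * star b ∈ (N : Set (H →L[ℂ] H)) :=
        mul_mem (huN' γ⁻¹) (hQN (star_mem hbQ))
      have hzM : X.u γ⁻¹ * star b ∈ (X.M : Set (H →L[ℂ] H)) := hN₂ hzN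
      have key : X.tr.τ (star b * b) = 0 := by
        have e1 : X.tr.τ (star b * b) = X.tr.τ (star b * (EN.E a * star (X.u γ))) :=
          stmt11_EA_coeff X hsbA hyu
        have e2 : X.tr.τ (star b * (EN.E a * star (X.u γ)))
            = X.tr.τ ((X.u γ⁻¹ * star b) * EN.E a) := by
          rw [← mul_assoc]
          rw [X.tr.tracial _ (mul_mem (X.A_sub hsbA) hyM) _ husM]
          rw [X.u_star, mul_assoc]
        have e3 : X.tr.τ ((X.u γ⁻¹ * star b) * EN.E a)
            = X.tr.τ ((X.u γ⁻¹ * star b) * a) := by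
          rw [← stmt11_selfadj X.M (N : Set (H →L[ℂ] H)) hN₂ h1N X.tr EN hzM haM]
          rw [EN.fix _ hzN]
        have e4 : X.tr.τ ((X.u γ⁻¹ * star b) * a) = 0 := by
          rw [mul_assoc]
          have hba : star b * a ∈ (X.A : Set (H →L[ℂ] H)) := mul_mem hsbA haA
          have hm : X.u γ⁻¹ * (star b * a) ∈ (X.M : Set (H →L[ℂ] H)) :=
            mul_mem (X.u_mem γ⁻¹) (X.A_sub hba)
          rw [← X.EA.trace_eq _ hm]
          have h := X.EA.bimod 1 (one_mem X.A) (star b * a) hba (X.u γ⁻¹) (X.u_mem γ⁻¹)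
          rw [one_mul, one_mul] at h
          rw [h, X.EA_u _ (inv_ne_one.mpr hγ), zero_mul, map_zero]
        rw [e1, e2, e3, e4]
      exact X.tr.faithful b hbM key
    -- hence `E_N(a)` equals its zeroth Fourier coefficient `b₁ ∈ Q ⊆ A`
    have hb1Q : X.EA.E (EN.E a) ∈ (Q : Set (H →L[ℂ] H)) := by
      have := hcoef 1
      rwa [stmt11_star_u_one X, mul_one] at this
    have hb1A : X.EA.E (EN.E a) ∈ (X.A : Set (H →L[ℂ] H)) := hQA hb1Q
    have hb1M : X.EA.E (EN.E a) ∈ (X.M : Set (H →L[ℂ] H)) := X.A_sub hb1A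
    have heq : EN.E a - X.EA.E (EN.E a) = 0 := by
      apply X.fourier_sep _ (sub_mem hyM hb1M)
      intro γ
      have hsplit : (EN.E a - X.EA.E (EN.E a)) * star (X.u γ)
          = EN.E a * star (X.u γ) - X.EA.E (EN.E a) * star (X.u γ) := sub_mul _ _ _
      rw [hsplit, map_sub]
      by_cases hγ : γ = 1
      · subst hγ
        rw [stmt11_star_u_one X, mul_one, mul_one, X.EA.fix _ hb1A, sub_self]
      · rw [hvanish γ hγ, stmt11_coeff_A_ne X hb1A hγ, sub_zero]
    have : EN.E a = X.EA.E (EN.E a) := by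
      have := sub_eq_zero.mp heq
      exact this
    rw [this]
    exact hb1A
  · intro hE
    -- the candidate subalgebra `Q = A ∩ N`
    set Qv : VonNeumannAlgebra H :=
      { toStarSubalgebra := X.A.toStarSubalgebra ⊓ N.toStarSubalgebra
        centralizer_centralizer' := by
          show Set.centralizer (Set.centralizer
            ((X.A.toStarSubalgebra ⊓ N.toStarSubalgebra : StarSubalgebra ℂ (H →L[ℂ] H)) :
              Set (H →L[ℂ] H))) = _
          rw [StarSubalgebra.coe_inf, X.A.coe_toStarSubalgebra, N.coe_toStarSubalgebra]
          exact stmt11_inter_cc X.A N } with hQv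
    have hQset : (Qv : Set (H →L[ℂ] H)) = (X.A : Set (H →L[ℂ] H)) ∩ (N : Set (H →L[ℂ] H)) := by
      rw [hQv]
      show ((X.A.toStarSubalgebra ⊓ N.toStarSubalgebra : StarSubalgebra ℂ (H →L[ℂ] H)) :
        Set (H →L[ℂ] H)) = _
      rw [StarSubalgebra.coe_inf, X.A.coe_toStarSubalgebra, N.coe_toStarSubalgebra]
    refine ⟨Qv, ?_, ?_, ?_, ?_⟩
    · -- `P₀ ⊆ Q`
      intro p hp
      rw [hQset]
      exact ⟨hP₀ hp, hN₁ (stmt11_mem_midCP_of_A X _ (zero_mem P₀) (hP₀ hp) hp)⟩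
    · -- `Q ⊆ A`
      intro q hq
      rw [hQset] at hq
      exact hq.1
    · -- `Γ`-invariance of `Q`
      intro γ q hq
      rw [hQset] at hq ⊢
      refine ⟨X.conj_mem γ q hq.1, ?_⟩
      show X.u γ * q * star (X.u γ) ∈ (N : Set (H →L[ℂ] H))
      rw [X.u_star]
      exact mul_mem (mul_mem (huN γ) hq.2) (huN γ⁻¹)
    · -- `N = Q ⋊ Γ`
      apply Set.Subset.antisymm
      · -- `N ⊆ Q ⋊ Γ`: the Fourier coefficients of elements of `N` lie in `Q`
        intro x hxN
        have hxM : x ∈ (X.M : Set (H →L[ℂ] H)) := hN₂ hxN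
        refine ⟨hxM, fun γ => ?_⟩
        have husM : star (X.u γ) ∈ (X.M : Set (H →L[ℂ] H)) := star_mem (X.u_mem γ)
        have hxu : x * star (X.u γ) ∈ (X.M : Set (H →L[ℂ] H)) := mul_mem hxM husM
        set b := X.EA.E (x * star (X.u γ)) with hbdef
        have hbA : b ∈ (X.A : Set (H →L[ℂ] H)) := X.EA.mem _ hxu
        have hbM : b ∈ (X.M : Set (H →L[ℂ] H)) := X.A_sub hbA
        have hcN : EN.E b ∈ (N : Set (H →L[ℂ] H)) := EN.mem b hbM
        have hcA : EN.E b ∈ (X.A : Set (H →L[ℂ] H)) := hE b hbA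
        have hcM : EN.E b ∈ (X.M : Set (H →L[ℂ] H)) := X.A_sub hcA
        have hdA : b - EN.E b ∈ (X.A : Set (H →L[ℂ] H)) := sub_mem hbA hcA
        have hdM : b - EN.E b ∈ (X.M : Set (H →L[ℂ] H)) := X.A_sub hdA
        have hsdA : star (b - EN.E b) ∈ (X.A : Set (H →L[ℂ] H)) := star_mem hdA
        have hsdM : star (b - EN.E b) ∈ (X.M : Set (H →L[ℂ] H)) := X.A_sub hsdA
        have heA : EN.E (star (b - EN.E b)) ∈ (X.A : Set (H →L[ℂ] H)) := hE _ hsdA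
        have heN : EN.E (star (b - EN.E b)) ∈ (N : Set (H →L[ℂ] H)) := EN.mem _ hsdM
        have heM : EN.E (star (b - EN.E b)) ∈ (X.M : Set (H →L[ℂ] H)) := hN₂ heN
        have t1 : X.tr.τ (star (b - EN.E b) * b)
            = X.tr.τ ((X.u γ⁻¹ * EN.E (star (b - EN.E b))) * x) := by
          calc X.tr.τ (star (b - EN.E b) * b)
              = X.tr.τ (star (b - EN.E b) * (x * star (X.u γ))) :=
                stmt11_EA_coeff X hsdA hxu
            _ = X.tr.τ ((star (b - EN.E b) * x) * star (X.u γ)) := by rw [mul_assoc]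
            _ = X.tr.τ (star (X.u γ) * (star (b - EN.E b) * x)) :=
                X.tr.tracial _ (mul_mem hsdM hxM) _ husM
            _ = X.tr.τ ((X.u γ⁻¹ * star (b - EN.E b)) * x) := by
                rw [X.u_star, ← mul_assoc]
            _ = X.tr.τ ((X.u γ⁻¹ * star (b - EN.E b)) * EN.E x) := by rw [EN.fix x hxN]
            _ = X.tr.τ (EN.E (X.u γ⁻¹ * star (b - EN.E b)) * x) :=
                (stmt11_selfadj X.M (N : Set (H →L[ℂ] H)) hN₂ h1N X.tr EN
                  (mul_mem (X.u_mem γ⁻¹) hsdM) hxM).symm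
            _ = X.tr.τ ((X.u γ⁻¹ * EN.E (star (b - EN.E b))) * x) := by
                have h := EN.bimod (X.u γ⁻¹) (huN γ⁻¹) 1 h1N (star (b - EN.E b)) hsdM
                rw [mul_one, mul_one] at h
                rw [h]
        have t2 : X.tr.τ (star (b - EN.E b) * EN.E b)
            = X.tr.τ ((X.u γ⁻¹ * EN.E (star (b - EN.E b))) * x) := by
          calc X.tr.τ (star (b - EN.E b) * EN.E b)
              = X.tr.τ (EN.E (star (b - EN.E b)) * b) :=
                (stmt11_selfadj X.M (N : Set (H →L[ℂ] H)) hN₂ h1N X.tr EN hsdM hbM).symm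
            _ = X.tr.τ (EN.E (star (b - EN.E b)) * (x * star (X.u γ))) :=
                stmt11_EA_coeff X heA hxu
            _ = X.tr.τ ((EN.E (star (b - EN.E b)) * x) * star (X.u γ)) := by rw [mul_assoc]
            _ = X.tr.τ (star (X.u γ) * (EN.E (star (b - EN.E b)) * x)) :=
                X.tr.tracial _ (mul_mem heM hxM) _ husM
            _ = X.tr.τ ((X.u γ⁻¹ * EN.E (star (b - EN.E b))) * x) := by
                rw [X.u_star, ← mul_assoc]
        have hz : X.tr.τ (star (b - EN.E b) * (b - EN.E b)) = 0 := by
          rw [mul_sub, map_sub, t1, t2, sub_self]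
        have hbc : b = EN.E b := sub_eq_zero.mp (X.tr.faithful _ hdM hz)
        rw [hQset]
        exact ⟨hbA, hbc ▸ hcN⟩
      · -- `Q ⋊ Γ ⊆ N`
        rintro x ⟨hxM, hcoef⟩
        have hyN : EN.E x ∈ (N : Set (H →L[ℂ] H)) := EN.mem x hxM
        have hyM : EN.E x ∈ (X.M : Set (H →L[ℂ] H)) := hN₂ hyN
        have heq : x - EN.E x = 0 := by
          apply X.fourier_sep _ (sub_mem hxM hyM)
          intro γ
          have husM : star (X.u γ) ∈ (X.M : Set (H →L[ℂ] H)) := star_mem (X.u_mem γ)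
          have hxu : x * star (X.u γ) ∈ (X.M : Set (H →L[ℂ] H)) := mul_mem hxM husM
          have hbQv : X.EA.E (x * star (X.u γ)) ∈ (Qv : Set (H →L[ℂ] H)) := hcoef γ
          rw [hQset] at hbQv
          obtain ⟨hbA, hbN⟩ := hbQv
          apply stmt11_EA_zero_of X (mul_mem (sub_mem hxM hyM) husM)
          intro a haA
          have haM : a ∈ (X.M : Set (H →L[ℂ] H)) := X.A_sub haA
          have heA : EN.E a ∈ (X.A : Set (H →L[ℂ] H)) := hE a haA
          have heN : EN.E a ∈ (N : Set (H →L[ℂ] H)) := EN.mem a haM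
          have heM : EN.E a ∈ (X.M : Set (H →L[ℂ] H)) := hN₂ heN
          have claim : X.tr.τ (a * (EN.E x * star (X.u γ)))
              = X.tr.τ (a * (x * star (X.u γ))) := by
            calc X.tr.τ (a * (EN.E x * star (X.u γ)))
                = X.tr.τ (star (X.u γ) * (a * EN.E x)) := by
                  rw [← mul_assoc]
                  exact X.tr.tracial _ (mul_mem haM hyM) _ husM
              _ = X.tr.τ ((X.u γ⁻¹ * a) * EN.E x) := by rw [X.u_star, ← mul_assoc]
              _ = X.tr.τ (EN.E (X.u γ⁻¹ * a) * x) :=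
                  (stmt11_selfadj X.M (N : Set (H →L[ℂ] H)) hN₂ h1N X.tr EN
                    (mul_mem (X.u_mem γ⁻¹) haM) hxM).symm
              _ = X.tr.τ ((X.u γ⁻¹ * EN.E a) * x) := by
                  have h := EN.bimod (X.u γ⁻¹) (huN γ⁻¹) 1 h1N a haM
                  rw [mul_one, mul_one] at h
                  rw [h]
              _ = X.tr.τ (EN.E a * (x * X.u γ⁻¹)) := by
                  rw [mul_assoc, X.tr.tracial _ (X.u_mem γ⁻¹) _ (mul_mem heM hxM),
                    mul_assoc]
              _ = X.tr.τ (EN.E a * X.EA.E (x * star (X.u γ))) := by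
                  rw [← X.u_star, stmt11_EA_coeff X heA hxu]
              _ = X.tr.τ (a * EN.E (X.EA.E (x * star (X.u γ)))) :=
                  stmt11_selfadj X.M (N : Set (H →L[ℂ] H)) hN₂ h1N X.tr EN haM
                    (X.A_sub hbA)
              _ = X.tr.τ (a * X.EA.E (x * star (X.u γ))) := by rw [EN.fix _ hbN]
              _ = X.tr.τ (a * (x * star (X.u γ))) := stmt11_EA_coeff X haA hxu
          have hsplit : a * ((x - EN.E x) * star (X.u γ))
              = a * (x * star (X.u γ)) - a * (EN.E x * star (X.u γ)) := by
            rw [sub_mul, mul_sub]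
          rw [hsplit, map_sub, claim, sub_self]
        have : x = EN.E x := sub_eq_zero.mp heq
        rw [this]
        exact hyN
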